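/- Let γ : [1,∞) → (0,∞) be a measurable slowly varying function (for every a > 0, γ(a u)/γ(u) → 1 as u → ∞) with γ(j) → +∞ as j → ∞, set ε_j = γ(j)/j and S_j = exp(Σ_{k=1}^{j−1} ε_k). Then for every β ∈ (0,1], the one-step separation ratio R_j(β) = (S_j − S_{j−1})/S_{j−1}^{1−β} tends to +∞ as j → ∞; in particular R_j(β) > 1 for all sufficiently large j. -/

import Mathlib

open Filter Real

/-!
Write `T j = log S j = ∑_{1 ≤ k < j} ε k`. Since `k ε k = γ k → ∞`, the partial sums eventually
dominate `c ∑ 1/k ≥ c log j - C` for every `c`, so `β T j - log j → ∞`. On the other hand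
`R j = e^{β T j} (e^{ε j} - 1) ≥ e^{β T j} / j = e^{β T j - log j}` as soon as `γ j ≥ 1`.
-/

theorem log_sub_log_le_sum_Ico_inv {a b : ℕ} (ha : 0 < a) (hab : a ≤ b) :
    log b - log a ≤ ∑ k ∈ Finset.Ico a b, (k : ℝ)⁻¹ := by
  have ha' : (0 : ℝ) < a := by exact_mod_cast ha
  have hb' : (0 : ℝ) < b := ha'.trans_le (by exact_mod_cast hab)
  rw [← log_div hb'.ne' ha'.ne', ← integral_inv]
  · exact (inv_antitoneOn_Icc_right ha').integral_le_sum_Ico hab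
  · rw [Set.uIcc_of_le (by exact_mod_cast hab)]
    exact fun h => (not_le.mpr ha') h.1

theorem tendsto_sum_Ico_sub_mul_log_atTop {ε : ℕ → ℝ}
    (hε : Tendsto (fun k : ℕ => (k : ℝ) * ε k) atTop atTop) {c : ℝ} (hc : 0 ≤ c) :
    Tendsto (fun j : ℕ => ∑ k ∈ Finset.Ico 1 j, ε k - c * log j) atTop atTop := by
  obtain ⟨K, hK⟩ :=
    eventually_atTop.mp ((hε.eventually_ge_atTop (c + 1)).and (eventually_ge_atTop 1))
  have hK1 : 1 ≤ K := (hK K le_rfl).2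
  have htail : ∀ j, K ≤ j → (c + 1) * (log j - log K) ≤ ∑ k ∈ Finset.Ico K j, ε k := by
    intro j hj
    calc (c + 1) * (log j - log K) ≤ (c + 1) * ∑ k ∈ Finset.Ico K j, (k : ℝ)⁻¹ := by
          gcongr
          exact log_sub_log_le_sum_Ico_inv hK1 hj
      _ = ∑ k ∈ Finset.Ico K j, (c + 1) / k := by
          rw [Finset.mul_sum]; rfl
      _ ≤ ∑ k ∈ Finset.Ico K j, ε k := by
          refine Finset.sum_le_sum fun k hk => ?_
          obtain ⟨hkc, hk1⟩ := hK k (Finset.mem_Ico.mp hk).1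
          have hk0 : (0 : ℝ) < k := by exact_mod_cast hk1
          rw [div_le_iff₀ hk0]
          linarith
  have hlog := (tendsto_log_atTop.comp tendsto_natCast_atTop_atTop).atTop_add
    (tendsto_const_nhds (x := ∑ k ∈ Finset.Ico 1 K, ε k - (c + 1) * log K))
  refine tendsto_atTop_mono' _ ?_ hlog
  filter_upwards [eventually_ge_atTop K] with j hj
  rw [← Finset.sum_Ico_consecutive _ hK1 hj]
  have htail_j := htail j hj
  simp only [Function.comp_apply]
  linarith

theorem exp_add_sub_exp_div_rpow (t e β : ℝ) :
    (exp (t + e) - exp t) / exp t ^ (1 - β) = exp (β * t) * (exp e - 1) := by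
  have h₁ : exp (t + e) = exp (β * t) * exp e * exp (t * (1 - β)) := by
    rw [← exp_add, ← exp_add]; ring_nf
  have h₂ : exp t = exp (β * t) * exp (t * (1 - β)) := by
    rw [← exp_add]; ring_nf
  rw [rpow_def_of_pos (exp_pos t), log_exp, div_eq_iff (exp_pos _).ne', h₁, h₂]
  ring

theorem exp_sub_log_le_mul_exp_sub_one {s e x : ℝ} (hx : 0 < x) (he : x⁻¹ ≤ e) :
    exp (s - log x) ≤ exp s * (exp e - 1) := by
  rw [exp_sub, exp_log hx, div_eq_mul_inv]
  gcongr
  linarith [add_one_le_exp e]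

theorem separation_ratio_divergence_slowly_varying_infinity_general
    (γ : ℝ → ℝ)
    (hγinf : Tendsto γ atTop atTop)
    (ε : ℕ → ℝ) (hε : ∀ j : ℕ, 1 ≤ j → ε j = γ j / j)
    (S : ℕ → ℝ) (hS : ∀ j, S j = Real.exp (∑ k ∈ Finset.Ico 1 j, ε k)) :
    ∀ β : ℝ, 0 < β → β ≤ 1 →
      Tendsto (fun j : ℕ => (S (j + 1) - S j) / S j ^ (1 - β)) atTop atTop ∧
      ∀ᶠ j : ℕ in atTop, 1 < (S (j + 1) - S j) / S j ^ (1 - β) := by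
  intro β hβ _
  set T : ℕ → ℝ := fun j => ∑ k ∈ Finset.Ico 1 j, ε k
  have hγnat := hγinf.comp tendsto_natCast_atTop_atTop
  have hkε : Tendsto (fun k : ℕ => (k : ℝ) * ε k) atTop atTop := by
    refine hγnat.congr' ?_
    filter_upwards [eventually_ge_atTop 1] with k hk
    have hk0 : (k : ℝ) ≠ 0 := by positivity
    simp only [Function.comp_apply, hε k hk, mul_div_cancel₀ _ hk0]
  have hexponent : Tendsto (fun j : ℕ => β * T j - log j) atTop atTop := by
    have hT := tendsto_sum_Ico_sub_mul_log_atTop hkε (inv_nonneg.mpr hβ.le)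
    refine (hT.const_mul_atTop hβ).congr fun j => ?_
    simp only [T, mul_sub, mul_inv_cancel_left₀ hβ.ne']
  have hbound : ∀ᶠ j : ℕ in atTop,
      exp (β * T j - log j) ≤ (S (j + 1) - S j) / S j ^ (1 - β) := by
    filter_upwards [eventually_ge_atTop 1, hγnat.eventually_ge_atTop 1] with j hj hγj
    have hj0 : (0 : ℝ) < j := by exact_mod_cast hj
    rw [hS, hS, Finset.sum_Ico_succ_top hj, exp_add_sub_exp_div_rpow]
    refine exp_sub_log_le_mul_exp_sub_one hj0 ?_
    rw [hε j hj, inv_eq_one_div]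
    exact div_le_div_of_nonneg_right hγj hj0.le
  have hdiv := tendsto_atTop_mono' _ hbound (tendsto_exp_atTop.comp hexponent)
  exact ⟨hdiv, hdiv.eventually_gt_atTop 1⟩

/-- For slowly varying `γ` with `γ(j) → ∞`, `ε_j = γ(j)/j`, and
`S_j = exp(Σ_{k=1}^{j-1} ε_k)`: for every `β ∈ (0,1]`, the separation ratio
`R_j(β) = (S_j - S_{j-1})/S_{j-1}^{1-β}` tends to `+∞`; in particular `R_j(β) > 1`
eventually. -/
theorem separation_ratio_divergence_slowly_varying_infinity
    (γ : ℝ → ℝ) (hmeas : Measurable γ) (hγpos : ∀ u : ℝ, 1 ≤ u → 0 < γ u)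
    (hsv : ∀ a : ℝ, 0 < a → Tendsto (fun u : ℝ => γ (a * u) / γ u) atTop (nhds 1))
    (hγinf : Tendsto γ atTop atTop)
    (ε : ℕ → ℝ) (hε : ∀ j : ℕ, 1 ≤ j → ε j = γ j / j)
    (S : ℕ → ℝ) (hS : ∀ j, S j = Real.exp (∑ k ∈ Finset.Ico 1 j, ε k)) :
    ∀ β : ℝ, 0 < β → β ≤ 1 →
      Tendsto (fun j : ℕ => (S (j + 1) - S j) / S j ^ (1 - β)) atTop atTop ∧
      ∀ᶠ j : ℕ in atTop, 1 < (S (j + 1) - S j) / S j ^ (1 - β) :=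
  separation_ratio_divergence_slowly_varying_infinity_general γ hγinf ε hε S hS
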